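/- Let P' be an r'×(r − r') matrix over 𝔽₂, let P_c = [I | P'] be the r'×r matrix over 𝔽₂ whose left block is the r'×r' identity matrix, and let w' be a natural number. Assume every nonzero x ∈ 𝔽₂^r with P_c x = 0 has Hamming weight at least 2w' + 1. Let s ∈ 𝔽₂^r and u ∈ 𝔽₂^{r'} satisfy |s| + |u| ≤ w'. Then there is exactly one vector v ∈ 𝔽₂^r of minimum Hamming weight among all vectors satisfying P_c v = P_c s + u, and this v satisfies Hamming distance from s at most |u|. -/

import Mathlib

/-! The candidate `v = s + (u, 0)` has the right syndrome, lies at distance `|u|` from `s`, and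
has weight at most `|s| + |u| ≤ w'`. Two vectors of weight at most `w'` with the same syndrome
differ by a kernel vector of weight at most `2w'`, which must vanish; so `v` is the only vector
of the coset in the ball of radius `w'`, and hence its unique minimum-weight element. -/

open Matrix

section Hamming

variable {ι κ β : Type*} [Fintype ι] [Fintype κ] [DecidableEq β]

theorem hammingDist_eq_hammingNorm_sub [AddCommGroup β] (x y : ι → β) :
    hammingDist x y = hammingNorm (x - y) := by
  rw [hammingDist_comm, hammingDist_eq_hammingNorm, neg_add_eq_sub]

theorem hammingNorm_add_le [AddCommGroup β] (x y : ι → β) :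
    hammingNorm (x + y) ≤ hammingNorm x + hammingNorm y := by
  calc hammingNorm (x + y) = hammingDist (x + y) 0 := (hammingDist_zero_right _).symm
    _ ≤ hammingDist (x + y) y + hammingDist y 0 := hammingDist_triangle _ _ _
    _ = hammingNorm x + hammingNorm y := by
      rw [hammingDist_eq_hammingNorm_sub, add_sub_cancel_right, hammingDist_zero_right]

theorem hammingNorm_sub_le [AddCommGroup β] (x y : ι → β) :
    hammingNorm (x - y) ≤ hammingNorm x + hammingNorm y := by
  calc hammingNorm (x - y) = hammingDist x y := (hammingDist_eq_hammingNorm_sub x y).symm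
    _ ≤ hammingDist x 0 + hammingDist 0 y := hammingDist_triangle _ _ _
    _ = hammingNorm x + hammingNorm y := by rw [hammingDist_zero_right, hammingDist_zero_left]

theorem hammingNorm_sumElim [Zero β] (x : ι → β) (y : κ → β) :
    hammingNorm (Sum.elim x y) = hammingNorm x + hammingNorm y := by
  simp only [hammingNorm, Finset.card_filter, Fintype.sum_sum_type, Sum.elim_inl, Sum.elim_inr]
  rfl

end Hamming

theorem fromCols_one_mulVec_sumElim_zero {κ ι R : Type*} [Fintype κ] [Fintype ι] [DecidableEq κ]
    [Semiring R] (P : Matrix κ ι R) (u : κ → R) :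
    fromCols (1 : Matrix κ κ R) P *ᵥ Sum.elim u 0 = u := by
  rw [fromCols_mulVec_sumElim, one_mulVec, mulVec_zero, add_zero]

theorem subsingleton_mulVec_eq_hammingNorm_le {κ ι R : Type*} [Fintype ι] [Ring R]
    [DecidableEq R] (H : Matrix κ ι R) {w : ℕ}
    (hH : ∀ x : ι → R, x ≠ 0 → H *ᵥ x = 0 → 2 * w + 1 ≤ hammingNorm x) (c : κ → R) :
    {x : ι → R | H *ᵥ x = c ∧ hammingNorm x ≤ w}.Subsingleton := by
  rintro x ⟨hx, hxw⟩ y ⟨hy, hyw⟩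
  by_contra hne
  have hker : H *ᵥ (x - y) = 0 := by rw [mulVec_sub, hx, hy, sub_self]
  have := hH _ (sub_ne_zero.mpr hne) hker
  have := hammingNorm_sub_le x y
  omega

section Sublevel

variable {α : Type*} {p : α → Prop} {f : α → ℕ} {w : ℕ} {v : α}

theorem forall_le_of_subsingleton_sublevel (hS : {a | p a ∧ f a ≤ w}.Subsingleton)
    (hv : p v) (hvw : f v ≤ w) (a : α) (ha : p a) : f v ≤ f a := by
  by_contra! hlt
  rw [hS ⟨ha, hlt.le.trans hvw⟩ ⟨hv, hvw⟩] at hlt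
  exact lt_irrefl _ hlt

theorem eq_of_forall_le_of_subsingleton_sublevel (hS : {a | p a ∧ f a ≤ w}.Subsingleton)
    (hv : p v) (hvw : f v ≤ w) (a : α) (ha : p a ∧ ∀ b, p b → f a ≤ f b) : a = v :=
  hS ⟨ha.1, (ha.2 v hv).trans hvw⟩ ⟨hv, hvw⟩

end Sublevel

/-- **Two-step decoder core.** Let `P_c = [I | P']` be a canonical-form parity
check matrix whose nonzero kernel vectors all have weight at least `2w' + 1`.
If `|s| + |u| ≤ w'`, then there is exactly one vector `v` of minimum Hamming
weight among all vectors with `P_c v = P_c s + u`, and this `v` is within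
Hamming distance `|u|` of `s`. -/
theorem two_step_decoder_minimum_weight
    (r' m w' : ℕ)
    (P' : Matrix (Fin r') (Fin m) (ZMod 2))
    (hker : ∀ x : (Fin r' ⊕ Fin m) → ZMod 2, x ≠ 0 →
      (Matrix.fromCols (1 : Matrix (Fin r') (Fin r') (ZMod 2)) P').mulVec x = 0 →
      2 * w' + 1 ≤ hammingNorm x)
    (s : (Fin r' ⊕ Fin m) → ZMod 2) (u : Fin r' → ZMod 2)
    (hwt : hammingNorm s + hammingNorm u ≤ w') :
    ∃ v : (Fin r' ⊕ Fin m) → ZMod 2,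
      ((Matrix.fromCols (1 : Matrix (Fin r') (Fin r') (ZMod 2)) P').mulVec v =
          (Matrix.fromCols (1 : Matrix (Fin r') (Fin r') (ZMod 2)) P').mulVec s + u ∧
        ∀ v' : (Fin r' ⊕ Fin m) → ZMod 2,
          (Matrix.fromCols (1 : Matrix (Fin r') (Fin r') (ZMod 2)) P').mulVec v' =
            (Matrix.fromCols (1 : Matrix (Fin r') (Fin r') (ZMod 2)) P').mulVec s + u →
          hammingNorm v ≤ hammingNorm v') ∧
      hammingDist v s ≤ hammingNorm u ∧
      (∀ v' : (Fin r' ⊕ Fin m) → ZMod 2,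
        ((Matrix.fromCols (1 : Matrix (Fin r') (Fin r') (ZMod 2)) P').mulVec v' =
            (Matrix.fromCols (1 : Matrix (Fin r') (Fin r') (ZMod 2)) P').mulVec s + u ∧
          ∀ v'' : (Fin r' ⊕ Fin m) → ZMod 2,
            (Matrix.fromCols (1 : Matrix (Fin r') (Fin r') (ZMod 2)) P').mulVec v'' =
              (Matrix.fromCols (1 : Matrix (Fin r') (Fin r') (ZMod 2)) P').mulVec s + u →
            hammingNorm v' ≤ hammingNorm v'') →
        v' = v) := by
  set Pc := fromCols (1 : Matrix (Fin r') (Fin r') (ZMod 2)) P'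
  set e : (Fin r' ⊕ Fin m) → ZMod 2 := Sum.elim u 0
  have he : hammingNorm e = hammingNorm u := by
    rw [hammingNorm_sumElim, hammingNorm_zero, add_zero]
  have hsyn : Pc *ᵥ (s + e) = Pc *ᵥ s + u := by
    rw [mulVec_add, fromCols_one_mulVec_sumElim_zero]
  have hdist : hammingDist (s + e) s = hammingNorm u := by
    rw [hammingDist_eq_hammingNorm_sub, add_sub_cancel_left, he]
  have hw : hammingNorm (s + e) ≤ w' := (hammingNorm_add_le s e).trans (he ▸ hwt)
  have hS := subsingleton_mulVec_eq_hammingNorm_le Pc hker (Pc *ᵥ s + u)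
  exact ⟨s + e, ⟨hsyn, forall_le_of_subsingleton_sublevel hS hsyn hw⟩, hdist.le,
    eq_of_forall_le_of_subsingleton_sublevel hS hsyn hw⟩
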